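/- Let x be a sequence of length n and let k ≤ n−1 be the position of the minimum value of x. Then |NG(x,k)| = 1 + #{ j | 1 ≤ j < k and PD⃖_x[j] = k − j }. (The quantity #{ j | 1 ≤ j < k and PD⃖_x[j] = k − j } is exactly the length of the right branch of the left subtree of the Cartesian tree of x.) -/

import Mathlib

/-- A sequence of length `n`: a function `ℕ → ℤ` injective on positions `1,…,n`. -/
def IsSeq (n : ℕ) (x : ℕ → ℤ) : Prop := Set.InjOn x (Set.Icc 1 n)

/-- Parent-distance table: `fwdPD x i = i - max{ j | 1 ≤ j < i, x j < x i }` if such `j`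
exists, `0` otherwise. -/
def fwdPD (x : ℕ → ℤ) (i : ℕ) : ℕ :=
  if h : ((Finset.Ico 1 i).filter (fun j => x j < x i)).Nonempty then
    i - ((Finset.Ico 1 i).filter (fun j => x j < x i)).max' h
  else 0

/-- Reverse parent-distance table: `revPD n x i = min{ j | i < j ≤ n, x j < x i } - i` if
such `j` exists, `0` otherwise. -/
def revPD (n : ℕ) (x : ℕ → ℤ) (i : ℕ) : ℕ :=
  if h : ((Finset.Ioc i n).filter (fun j => x j < x i)).Nonempty then
    ((Finset.Ioc i n).filter (fun j => x j < x i)).min' h - i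
  else 0

/-- The swap `τ(x,i)`: exchanges positions `i` and `i+1`. -/
def swapSeq (x : ℕ → ℤ) (i : ℕ) : ℕ → ℤ :=
  fun j => if j = i then x (i + 1) else if j = i + 1 then x i else x j

/-- The parent-distance table of a sequence of length `n`, as a function on `Fin n`
(position `k : Fin n` corresponds to index `k+1 ∈ {1,…,n}`). -/
def PDvec (n : ℕ) (x : ℕ → ℤ) : Fin n → ℕ := fun k => fwdPD x (k.1 + 1)

/-- `NGat n x i` is the set of parent-distance tables obtained by a swap at position `i`
(`1 ≤ i ≤ n-1`) from some sequence `z` having the same Cartesian tree (i.e. the same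
parent-distance table) as `x`; it is empty for `i` out of range. -/
def NGat (n : ℕ) (x : ℕ → ℤ) (i : ℕ) : Set (Fin n → ℕ) :=
  {P | 1 ≤ i ∧ i + 1 ≤ n ∧
    ∃ z, IsSeq n z ∧ PDvec n z = PDvec n x ∧ P = PDvec n (swapSeq z i)}

/-- The neighborhood of (the Cartesian tree of) `x` in the swap graph. -/
def NG (n : ℕ) (x : ℕ → ℤ) : Set (Fin n → ℕ) := ⋃ i, NGat n x i

/-!
Every `z` with the Cartesian tree of `x` also has its minimum at `k`, so `τ(z,k)` moves the root
to `k + 1`; positions `i ≠ k` of its table are then read off the table of `x`. At position `k` the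
table of `τ(z,k)` points to the last `j < k` with `z j < z (k+1)`, if any. Such a `j` is a suffix
minimum of `z` on `[1,k)`, i.e. a node on the right branch of the left subtree, and the tree
detects these, so they are the nodes `j` with `PD⃖_x[j] = k - j`. Conversely the empty choice and
each such `j` are realised: rescale `x` on `[1,k)` to open a gap above every value, translate
`x (k+1..n)` into the gap just above `x j` (or below all of `x` for the empty choice), and move
`x k` below everything.
-/

open Finset

section ParentDistance

variable {y z : ℕ → ℤ} {i j : ℕ}

lemma fwdPD_eq_zero_or_exists : fwdPD y i = 0 ∨ ∃ j, 1 ≤ j ∧ j < i ∧ fwdPD y i = i - j := by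
  unfold fwdPD
  split_ifs with h
  · have hmax := mem_Ico.1 (mem_filter.1 (max'_mem _ h)).1
    exact Or.inr ⟨_, hmax.1, hmax.2, rfl⟩
  · exact Or.inl rfl

lemma fwdPD_eq_zero_iff : fwdPD y i = 0 ↔ ∀ j, 1 ≤ j → j < i → y i ≤ y j := by
  unfold fwdPD
  split_ifs with h
  · obtain ⟨hm, hlt⟩ := mem_filter.1 (max'_mem _ h)
    obtain ⟨hm1, hmi⟩ := mem_Ico.1 hm
    exact ⟨fun h0 => by omega, fun hle => absurd (hle _ hm1 hmi) (not_le.2 hlt)⟩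
  · simp only [not_nonempty_iff_eq_empty, filter_eq_empty_iff, mem_Ico, not_lt, and_imp] at h
    exact ⟨fun _ => h, fun _ => rfl⟩

lemma fwdPD_eq_sub_iff (hj : 1 ≤ j) (hji : j < i) :
    fwdPD y i = i - j ↔ y j < y i ∧ ∀ m, j < m → m < i → y i ≤ y m := by
  unfold fwdPD
  split_ifs with h
  · have key : ∀ M, M < i → (i - M = i - j ↔ M = j) := fun M hM => by omega
    rw [key _ (mem_Ico.1 (mem_filter.1 (max'_mem _ h)).1).2, max'_eq_iff]
    simp only [mem_filter, mem_Ico, hj, hji, true_and, and_imp]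
    refine and_congr_right fun _ => ⟨fun hb m hjm hmi => ?_, fun hm b hb1 hbi hb => ?_⟩
    · exact not_lt.1 fun hlt => absurd (hb m (by omega) hmi hlt) (by omega)
    · exact not_lt.1 fun hjb => absurd (hm b hjb hbi) (not_le.2 hb)
  · refine ⟨fun h0 => by omega, fun ⟨hlt, _⟩ => absurd ⟨j, ?_⟩ h⟩
    simp [hj, hji, hlt]

lemma fwdPD_congr (h : ∀ j, 1 ≤ j → j < i → (z j < z i ↔ y j < y i)) :
    fwdPD z i = fwdPD y i := by
  unfold fwdPD
  rw [filter_congr fun j hj => h j (mem_Ico.1 hj).1 (mem_Ico.1 hj).2]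

lemma revPD_eq_sub_iff {n : ℕ} (hij : i < j) (hjn : j ≤ n) :
    revPD n y i = j - i ↔ y j < y i ∧ ∀ m, i < m → m < j → y i ≤ y m := by
  unfold revPD
  split_ifs with h
  · have key : ∀ M, i < M → (M - i = j - i ↔ M = j) := fun M hM => by omega
    rw [key _ (mem_Ioc.1 (mem_filter.1 (min'_mem _ h)).1).1, min'_eq_iff]
    simp only [mem_filter, mem_Ioc, hij, hjn, true_and, and_imp]
    refine and_congr_right fun _ => ⟨fun hb m him hmj => ?_, fun hm b hib hbn hb => ?_⟩
    · exact not_lt.1 fun hlt => absurd (hb m him (by omega) hlt) (by omega)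
    · exact not_lt.1 fun hbj => absurd (hm b hib hbj) (not_le.2 hb)
  · refine ⟨fun h0 => by omega, fun ⟨hlt, _⟩ => absurd ⟨j, ?_⟩ h⟩
    simp [hij, hjn, hlt]

lemma PDvec_eq_iff {n : ℕ} :
    PDvec n z = PDvec n y ↔ ∀ i, 1 ≤ i → i ≤ n → fwdPD z i = fwdPD y i := by
  refine ⟨fun h i hi hin => ?_, fun h => funext fun p => h _ (by omega) p.2⟩
  simpa [PDvec, Nat.sub_add_cancel hi] using congrFun h ⟨i - 1, by omega⟩

end ParentDistance

def MinAt (n k : ℕ) (x : ℕ → ℤ) : Prop := ∀ j, 1 ≤ j → j ≤ n → j ≠ k → x k < x j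

namespace MinAt

variable {n k i : ℕ} {x z : ℕ → ℤ}

lemma fwdPD_self (hx : MinAt n k x) (hkn : k ≤ n) : fwdPD x k = 0 :=
  fwdPD_eq_zero_iff.2 fun j hj hjk => (hx j hj (by omega) hjk.ne).le

lemma exists_parent (hx : MinAt n k x) (hk : 1 ≤ k) (hki : k < i) (hin : i ≤ n) :
    ∃ p, k ≤ p ∧ p < i ∧ fwdPD x i = i - p := by
  have hxi := hx i (by omega) hin hki.ne'
  rcases fwdPD_eq_zero_or_exists (y := x) (i := i) with h0 | ⟨p, hp1, hpi, hp⟩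
  · exact absurd (fwdPD_eq_zero_iff.1 h0 k hk hki) (not_le.2 hxi)
  · refine ⟨p, not_lt.1 fun hpk => ?_, hpi, hp⟩
    exact absurd (((fwdPD_eq_sub_iff hp1 hpi).1 hp).2 k hpk hki) (not_le.2 hxi)

lemma of_fwdPD_eq (hx : MinAt n k x) (hz : IsSeq n z) (hk : 1 ≤ k) (hkn : k ≤ n)
    (h : ∀ i, 1 ≤ i → i ≤ n → fwdPD z i = fwdPD x i) : MinAt n k z := by
  have hlt : ∀ i, k < i → i ≤ n → z k < z i := by
    intro i
    induction i using Nat.strong_induction_on with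
    | _ i ih =>
      intro hki hin
      obtain ⟨p, hkp, hpi, hp⟩ := hx.exists_parent hk hki hin
      have hzp := ((fwdPD_eq_sub_iff (by omega) hpi).1 ((h i (by omega) hin).trans hp)).1
      rcases hkp.eq_or_lt with rfl | hkp
      · exact hzp
      · exact (ih p hpi hkp (by omega)).trans hzp
  intro j hj hjn hjk
  rcases lt_or_gt_of_ne hjk with hjk | hkj
  · have hle := fwdPD_eq_zero_iff.1 ((h k hk hkn).trans (hx.fwdPD_self hkn)) j hj hjk
    exact hle.lt_of_ne fun he => hjk.ne (hz ⟨hj, hjn⟩ ⟨hk, hkn⟩ he.symm)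
  · exact hlt j hkj hjn

lemma fwdPD_eq (hx : MinAt n k x) (hz : MinAt n k z) (hk : 1 ≤ k) (hkn : k ≤ n)
    (hpre : ∀ a b, 1 ≤ a → a < b → b < k → (z a < z b ↔ x a < x b))
    (hpost : ∀ a b, k < a → a ≤ n → k < b → b ≤ n → (z a < z b ↔ x a < x b))
    (hi : 1 ≤ i) (hin : i ≤ n) : fwdPD z i = fwdPD x i := by
  rcases lt_trichotomy i k with hik | rfl | hki
  · exact fwdPD_congr fun j hj hji => hpre j i hj hji hik
  · rw [hz.fwdPD_self hkn, hx.fwdPD_self hkn]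
  · obtain ⟨p, hkp, hpi, hp⟩ := hx.exists_parent hk hki hin
    obtain ⟨hxp, hxm⟩ := (fwdPD_eq_sub_iff (by omega) hpi).1 hp
    rw [hp, fwdPD_eq_sub_iff (by omega) hpi]
    refine ⟨?_, fun m hpm hmi => not_lt.1 fun h => ?_⟩
    · rcases hkp.eq_or_lt with rfl | hkp
      · exact hz i hi hin hki.ne'
      · exact (hpost p i hkp (by omega) hki hin).2 hxp
    · exact not_le.2 ((hpost m i (by omega) (by omega) hki hin).1 h) (hxm m hpm hmi)

end MinAt

def IsSuffixMin (x : ℕ → ℤ) (K j : ℕ) : Prop := ∀ m, j < m → m < K → x j < x m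

section SuffixMin

variable {x z : ℕ → ℤ} {j K : ℕ}

lemma isSuffixMin_succ_iff (hj : 1 ≤ j) (hjK : j < K) :
    IsSuffixMin x (K + 1) j ↔ IsSuffixMin x K j ∧ fwdPD x K ≠ 0 ∧ j ≤ K - fwdPD x K := by
  constructor
  · intro h
    have hK : x j < x K := h K hjK K.lt_succ_self
    refine ⟨fun m hjm hmK => h m hjm (by omega), ?_⟩
    rcases fwdPD_eq_zero_or_exists (y := x) (i := K) with h0 | ⟨p, hp1, hpK, hp⟩
    · exact absurd (fwdPD_eq_zero_iff.1 h0 j hj hjK) (not_le.2 hK)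
    · refine ⟨by omega, ?_⟩
      have hjp : j ≤ p := not_lt.1 fun hpj =>
        absurd (((fwdPD_eq_sub_iff hp1 hpK).1 hp).2 j hpj hjK) (not_le.2 hK)
      omega
  · rintro ⟨h, h0, hjp⟩
    rcases fwdPD_eq_zero_or_exists (y := x) (i := K) with h0' | ⟨p, hp1, hpK, hp⟩
    · exact absurd h0' h0
    have hxp := ((fwdPD_eq_sub_iff hp1 hpK).1 hp).1
    have hjK' : x j < x K := by
      rcases (show j ≤ p by omega).eq_or_lt with rfl | hjp
      · exact hxp
      · exact (h p hjp hpK).trans hxp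
    intro m hjm hmK
    rcases (Nat.lt_succ_iff.1 hmK).lt_or_eq with hmK | rfl
    · exact h m hjm hmK
    · exact hjK'

lemma isSuffixMin_congr (h : ∀ i, 1 ≤ i → i < K → fwdPD z i = fwdPD x i) (hj : 1 ≤ j)
    (hjK : j < K) : IsSuffixMin z K j ↔ IsSuffixMin x K j := by
  induction K with
  | zero => omega
  | succ K ih =>
    rcases (Nat.lt_succ_iff.1 hjK).lt_or_eq with hjK | rfl
    · rw [isSuffixMin_succ_iff hj hjK, isSuffixMin_succ_iff hj hjK,
        ih (fun i hi hiK => h i hi (by omega)) hjK, h K (by omega) K.lt_succ_self]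
    · exact ⟨fun _ m hjm hmK => by omega, fun _ m hjm hmK => by omega⟩

lemma revPD_eq_sub_iff_isSuffixMin {n k : ℕ} (hx : IsSeq n x) (hmin : MinAt n k x)
    (hj : 1 ≤ j) (hjk : j < k) (hkn : k ≤ n) :
    revPD n x j = k - j ↔ IsSuffixMin x k j := by
  rw [revPD_eq_sub_iff hjk hkn]
  refine ⟨fun ⟨_, hle⟩ m hjm hmk => (hle m hjm hmk).lt_of_ne fun he => ?_,
    fun h => ⟨hmin j hj (by omega) hjk.ne, fun m hjm hmk => (h m hjm hmk).le⟩⟩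
  exact hjm.ne (hx ⟨hj, by omega⟩ ⟨by omega, by omega⟩ he)

end SuffixMin

section Swap

variable {n k i j : ℕ} {x z : ℕ → ℤ}

@[simp] lemma swapSeq_apply_self : swapSeq z k k = z (k + 1) := by simp [swapSeq]

@[simp] lemma swapSeq_apply_succ : swapSeq z k (k + 1) = z k := by simp [swapSeq]

lemma swapSeq_apply_of_ne (h1 : j ≠ k) (h2 : j ≠ k + 1) : swapSeq z k j = z j := by
  simp [swapSeq, h1, h2]

lemma swapSeq_apply_of_lt {m : ℕ} (hmk : m < k) : swapSeq z k m = z m :=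
  swapSeq_apply_of_ne hmk.ne (by omega)

lemma fwdPD_swapSeq_of_lt (hik : i < k) : fwdPD (swapSeq z k) i = fwdPD z i :=
  fwdPD_congr fun _ _ hji => by rw [swapSeq_apply_of_lt (hji.trans hik), swapSeq_apply_of_lt hik]

lemma fwdPD_swapSeq_succ (hz : MinAt n k z) (hkn : k + 1 ≤ n) :
    fwdPD (swapSeq z k) (k + 1) = 0 := by
  refine fwdPD_eq_zero_iff.2 fun j hj hjk => ?_
  rw [swapSeq_apply_succ]
  rcases (Nat.lt_succ_iff.1 hjk).lt_or_eq with hjk | rfl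
  · rw [swapSeq_apply_of_lt hjk]
    exact (hz j hj (by omega) hjk.ne).le
  · rw [swapSeq_apply_self]
    exact (hz (j + 1) (by omega) hkn (by omega)).le

lemma fwdPD_swapSeq_of_succ_lt (hz : MinAt n k z) (hk : 1 ≤ k) (hki : k + 1 < i) (hin : i ≤ n) :
    fwdPD (swapSeq z k) i = if fwdPD z i = i - k then i - (k + 1) else fwdPD z i := by
  obtain ⟨p, hkp, hpi, hp⟩ := hz.exists_parent hk (by omega) hin
  obtain ⟨hzp, hzm⟩ := (fwdPD_eq_sub_iff (by omega) hpi).1 hp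
  have hy : ∀ m, k + 1 < m → swapSeq z k m = z m := fun m hm =>
    swapSeq_apply_of_ne (by omega) (by omega)
  rw [hp]
  rcases le_or_gt p (k + 1) with hpk | hpk
  · have : fwdPD (swapSeq z k) i = i - (k + 1) := by
      rw [fwdPD_eq_sub_iff (by omega) hki, swapSeq_apply_succ, hy i hki]
      exact ⟨hz i (by omega) hin (by omega),
        fun m hkm hmi => (hy m hkm).symm ▸ hzm m (by omega) hmi⟩
    rw [this]
    split_ifs <;> omega
  · rw [if_neg (by omega), fwdPD_eq_sub_iff (by omega) hpi, hy p hpk, hy i hki]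
    exact ⟨hzp, fun m hpm hmi => (hy m (by omega)).symm ▸ hzm m hpm hmi⟩

/-- The table of `τ(z,k)` for any `z` with the Cartesian tree of `x`, given its entry `a` at
position `k`. -/
def swapTable (n k : ℕ) (x : ℕ → ℤ) (a : ℕ) : Fin n → ℕ := fun p =>
  if p.1 + 1 < k then fwdPD x (p.1 + 1)
  else if p.1 + 1 = k then a
  else if p.1 + 1 = k + 1 then 0
  else if fwdPD x (p.1 + 1) = p.1 + 1 - k then p.1 + 1 - (k + 1)
  else fwdPD x (p.1 + 1)

lemma swapTable_injective (hk : 1 ≤ k) (hkn : k ≤ n) : Function.Injective (swapTable n k x) := by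
  intro a b h
  simpa [swapTable, Nat.sub_add_cancel hk] using congrFun h ⟨k - 1, by omega⟩

lemma PDvec_swapSeq (hz : MinAt n k z) (hk : 1 ≤ k) (hkn : k + 1 ≤ n)
    (hzx : PDvec n z = PDvec n x) :
    PDvec n (swapSeq z k) = swapTable n k x (fwdPD (swapSeq z k) k) := by
  funext p
  have hzx' : fwdPD z (p.1 + 1) = fwdPD x (p.1 + 1) := congrFun hzx p
  have hpn := p.2
  simp only [PDvec, swapTable]
  split_ifs with h1 h2 h3 h4
  · rw [fwdPD_swapSeq_of_lt h1, hzx']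
  · rw [h2]
  · rw [h3]
    exact fwdPD_swapSeq_succ hz hkn
  · rw [fwdPD_swapSeq_of_succ_lt hz hk (by omega) (by omega), hzx', if_pos h4]
  · rw [fwdPD_swapSeq_of_succ_lt hz hk (by omega) (by omega), hzx', if_neg h4]

end Swap

lemma mul_lt_mul_add_iff_le {M a c d : ℤ} (hd : 0 < d) (hdM : d < M) :
    M * a < M * c + d ↔ a ≤ c := by
  refine ⟨fun h => not_lt.1 fun hca => ?_, fun h => ?_⟩
  · nlinarith [mul_le_mul_of_nonneg_left (show c + 1 ≤ a by omega) (hd.trans hdM).le]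
  · nlinarith [mul_le_mul_of_nonneg_left h (hd.trans hdM).le]

lemma mul_add_lt_mul_iff_lt {M a c d : ℤ} (hd : 0 < d) (hdM : d < M) :
    M * c + d < M * a ↔ c < a := by
  refine ⟨fun h => not_le.1 fun hac => ?_, fun h => ?_⟩
  · nlinarith [mul_le_mul_of_nonneg_left hac (hd.trans hdM).le]
  · nlinarith [mul_le_mul_of_nonneg_left (show c + 1 ≤ a by omega) (hd.trans hdM).le]

def gapWidth (n k : ℕ) (x : ℕ → ℤ) : ℤ := 1 + ∑ i ∈ Ioc k n, (x i - x k)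

/-- Scaling `x` on `[1,k)` by `gapWidth n k x` leaves a gap above each value that can hold the
translated right part `x (k+1..n)`; placing it above `gapWidth n k x * c` keeps the Cartesian tree
of `x` while position `k + 1` now compares with the left part as `c` does. -/
def regraft (n k : ℕ) (x : ℕ → ℤ) (c : ℤ) : ℕ → ℤ := fun i =>
  if i < k then gapWidth n k x * x i
  else if i = k then gapWidth n k x * min c (x k - 1)
  else gapWidth n k x * c + (x i - x k)

section Regraft

variable {n k i : ℕ} {x : ℕ → ℤ} {c : ℤ}

lemma MinAt.sub_pos (hmin : MinAt n k x) (hki : k < i) (hin : i ≤ n) :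
    0 < x i - x k :=
  _root_.sub_pos.2 (hmin i (by omega) hin hki.ne')

lemma MinAt.gapWidth_pos (hmin : MinAt n k x) : 0 < gapWidth n k x := by
  have := sum_nonneg fun j hj => (hmin.sub_pos (mem_Ioc.1 hj).1 (mem_Ioc.1 hj).2).le
  unfold gapWidth
  omega

lemma MinAt.sub_lt_gapWidth (hmin : MinAt n k x) (hki : k < i) (hin : i ≤ n) :
    x i - x k < gapWidth n k x := by
  have := single_le_sum (fun j hj => (hmin.sub_pos (mem_Ioc.1 hj).1 (mem_Ioc.1 hj).2).le)
    (mem_Ioc.2 ⟨hki, hin⟩)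
  unfold gapWidth
  omega

lemma regraft_of_lt (hik : i < k) : regraft n k x c i = gapWidth n k x * x i := by
  simp [regraft, hik]

lemma regraft_self : regraft n k x c k = gapWidth n k x * min c (x k - 1) := by
  simp [regraft]

lemma regraft_of_gt (hki : k < i) :
    regraft n k x c i = gapWidth n k x * c + (x i - x k) := by
  simp [regraft, hki.not_gt, hki.ne']

lemma minAt_regraft (hmin : MinAt n k x) : MinAt n k (regraft n k x c) := by
  have hM := hmin.gapWidth_pos
  intro j hj hjn hjk
  rw [regraft_self]
  rcases lt_or_gt_of_ne hjk with hjk | hkj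
  · rw [regraft_of_lt hjk]
    have : min c (x k - 1) < x j := (min_le_right _ _).trans_lt (by linarith [hmin j hj hjn hjk.ne])
    exact mul_lt_mul_of_pos_left this hM
  · rw [regraft_of_gt hkj]
    have := mul_le_mul_of_nonneg_left (min_le_left c (x k - 1)) hM.le
    linarith [hmin.sub_pos hkj hjn]

lemma regraft_lt_succ_iff (hmin : MinAt n k x) (hkn : k + 1 ≤ n) (hik : i < k) :
    regraft n k x c i < regraft n k x c (k + 1) ↔ x i ≤ c := by
  rw [regraft_of_lt hik, regraft_of_gt k.lt_succ_self]
  exact mul_lt_mul_add_iff_le (hmin.sub_pos k.lt_succ_self hkn)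
    (hmin.sub_lt_gapWidth k.lt_succ_self hkn)

lemma isSeq_regraft (hx : IsSeq n x) (hmin : MinAt n k x) :
    IsSeq n (regraft n k x c) := by
  have hM := hmin.gapWidth_pos
  have hz := minAt_regraft (c := c) hmin
  have hne : ∀ a b, 1 ≤ a → a < b → b ≤ n → regraft n k x c a ≠ regraft n k x c b := by
    intro a b ha hab hbn
    rcases lt_trichotomy a k with hak | rfl | hka
    · rcases lt_trichotomy b k with hbk | rfl | hkb
      · rw [regraft_of_lt hak, regraft_of_lt hbk]
        exact fun h => hab.ne (hx ⟨ha, by omega⟩ ⟨by omega, hbn⟩ (mul_left_cancel₀ hM.ne' h))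
      · exact (hz a ha (by omega) hak.ne).ne'
      · rw [regraft_of_lt hak, regraft_of_gt hkb]
        have hd := hmin.sub_pos hkb hbn
        have hdM := hmin.sub_lt_gapWidth hkb hbn
        rcases le_or_gt (x a) c with h | h
        · exact ((mul_lt_mul_add_iff_le hd hdM).2 h).ne
        · exact ((mul_add_lt_mul_iff_lt hd hdM).2 h).ne'
    · exact (hz b (by omega) hbn hab.ne').ne
    · rw [regraft_of_gt hka, regraft_of_gt (hka.trans hab)]
      exact fun h => hab.ne (hx ⟨ha, by omega⟩ ⟨by omega, hbn⟩ (by linarith))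
  intro a ha b hb h
  by_contra hab
  rcases lt_or_gt_of_ne hab with hab | hab
  · exact hne a b ha.1 hab hb.2 h
  · exact hne b a hb.1 hab ha.2 h.symm

lemma PDvec_regraft (hmin : MinAt n k x) (hk : 1 ≤ k) (hkn : k ≤ n) :
    PDvec n (regraft n k x c) = PDvec n x := by
  have hM := hmin.gapWidth_pos
  refine PDvec_eq_iff.2 fun i hi hin => hmin.fwdPD_eq (minAt_regraft hmin) hk hkn ?_ ?_ hi hin
  · intro a b _ hab hbk
    rw [regraft_of_lt (hab.trans hbk), regraft_of_lt hbk]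
    exact mul_lt_mul_iff_right₀ hM
  · intro a b hka _ hkb _
    rw [regraft_of_gt hka, regraft_of_gt hkb, add_lt_add_iff_left, sub_lt_sub_iff_right]

end Regraft

/-- The possible entries at position `k` of the table of `τ(z,k)`: `0`, or the distance `k - j`
to a node `j` on the right branch of the left subtree. -/
def swapEntries (n k : ℕ) (x : ℕ → ℤ) : Finset ℕ :=
  insert 0 (((Ico 1 k).filter fun j => revPD n x j = k - j).image (k - ·))

lemma card_swapEntries (n k : ℕ) (x : ℕ → ℤ) :
    (swapEntries n k x).card = 1 + ((Ico 1 k).filter fun j => revPD n x j = k - j).card := by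
  rw [swapEntries, card_insert_of_notMem, card_image_of_injOn, add_comm]
  · intro a ha b hb h
    simp only [coe_filter, mem_Ico, Set.mem_ofPred_eq] at ha hb h
    omega
  · simp only [mem_image, mem_filter, mem_Ico, not_exists, not_and, and_imp]
    omega

section Neighbours

variable {n k : ℕ} {x z : ℕ → ℤ}

lemma fwdPD_swapSeq_mem_swapEntries (hx : IsSeq n x) (hmin : MinAt n k x) (hkn : k ≤ n)
    (hzx : PDvec n z = PDvec n x) : fwdPD (swapSeq z k) k ∈ swapEntries n k x := by
  rcases fwdPD_eq_zero_or_exists (y := swapSeq z k) (i := k) with h0 | ⟨j, hj, hjk, hj'⟩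
  · rw [h0]
    exact mem_insert_self _ _
  rw [hj']
  refine mem_insert_of_mem (mem_image.2 ⟨j, mem_filter.2 ⟨mem_Ico.2 ⟨hj, hjk⟩, ?_⟩, rfl⟩)
  obtain ⟨hlt, hle⟩ := (fwdPD_eq_sub_iff hj hjk).1 hj'
  rw [swapSeq_apply_self, swapSeq_apply_of_lt hjk] at hlt
  rw [revPD_eq_sub_iff_isSuffixMin hx hmin hj hjk hkn,
    ← isSuffixMin_congr (fun i hi hik => PDvec_eq_iff.1 hzx i hi (by omega)) hj hjk]
  intro m hjm hmk
  have := hle m hjm hmk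
  rw [swapSeq_apply_self, swapSeq_apply_of_lt hmk] at this
  exact hlt.trans_le this

lemma exists_fwdPD_swapSeq_eq (hx : IsSeq n x) (hmin : MinAt n k x) (hk : 1 ≤ k)
    (hkn : k + 1 ≤ n) {a : ℕ} (ha : a ∈ swapEntries n k x) :
    ∃ z, IsSeq n z ∧ PDvec n z = PDvec n x ∧ fwdPD (swapSeq z k) k = a := by
  rcases mem_insert.1 ha with rfl | ha
  · refine ⟨regraft n k x (x k - 1), isSeq_regraft hx hmin, PDvec_regraft hmin hk (by omega),
      fwdPD_eq_zero_iff.2 fun j hj hjk => ?_⟩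
    rw [swapSeq_apply_self, swapSeq_apply_of_lt hjk]
    refine not_lt.1 fun h => ?_
    linarith [(regraft_lt_succ_iff hmin hkn hjk).1 h, hmin j hj (by omega) hjk.ne]
  · obtain ⟨j, hjS, rfl⟩ := mem_image.1 ha
    obtain ⟨hj, hjk⟩ := mem_Ico.1 (mem_filter.1 hjS).1
    have hsuf := (revPD_eq_sub_iff_isSuffixMin hx hmin hj hjk (by omega)).1 (mem_filter.1 hjS).2
    refine ⟨regraft n k x (x j), isSeq_regraft hx hmin, PDvec_regraft hmin hk (by omega), ?_⟩
    rw [fwdPD_eq_sub_iff hj hjk, swapSeq_apply_self, swapSeq_apply_of_lt hjk]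
    refine ⟨(regraft_lt_succ_iff hmin hkn hjk).2 le_rfl, fun m hjm hmk => ?_⟩
    rw [swapSeq_apply_of_lt hmk]
    exact not_lt.1 fun h => not_le.2 (hsuf m hjm hmk) ((regraft_lt_succ_iff hmin hkn hmk).1 h)

lemma NGat_eq_image (hx : IsSeq n x) (hmin : MinAt n k x) (hk : 1 ≤ k) (hkn : k + 1 ≤ n) :
    NGat n x k = swapTable n k x '' swapEntries n k x := by
  ext P
  simp only [NGat, hk, hkn, true_and, Set.mem_ofPred_eq, Set.mem_image, mem_coe]
  constructor
  · rintro ⟨z, hz, hzx, rfl⟩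
    have hzmin := hmin.of_fwdPD_eq hz hk (by omega) (PDvec_eq_iff.1 hzx)
    exact ⟨_, fwdPD_swapSeq_mem_swapEntries hx hmin (by omega) hzx,
      (PDvec_swapSeq hzmin hk hkn hzx).symm⟩
  · rintro ⟨a, ha, rfl⟩
    obtain ⟨z, hz, hzx, rfl⟩ := exists_fwdPD_swapSeq_eq hx hmin hk hkn ha
    have hzmin := hmin.of_fwdPD_eq hz hk (by omega) (PDvec_eq_iff.1 hzx)
    exact ⟨z, hz, hzx, (PDvec_swapSeq hzmin hk hkn hzx).symm⟩

end Neighbours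

theorem stmt14 (n k : ℕ) (x : ℕ → ℤ) (hx : IsSeq n x)
    (hk1 : 1 ≤ k) (hk2 : k + 1 ≤ n)
    (hmin : ∀ j, 1 ≤ j → j ≤ n → j ≠ k → x k < x j) :
    (NGat n x k).ncard =
      1 + ((Finset.Ico 1 k).filter (fun j => revPD n x j = k - j)).card := by
  rw [NGat_eq_image hx hmin hk1 hk2,
    Set.ncard_image_of_injective _ (swapTable_injective hk1 (by omega)), Set.ncard_coe_finset,
    card_swapEntries]
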